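/- Division theorem in A_n[t]: Let P_1,...,P_r ∈ A_n[t] be nonzero, and define the partition Δ_1 = exp(P_1)+ℕ^{2n+1}, Δ_i = (exp(P_i)+ℕ^{2n+1}) \ ∪_{j<i} Δ_j for i = 2,...,r, and Δ̄ = ℕ^{2n+1} \ ∪_i Δ_i, where exp denotes the ⊲-leading exponent. Then for every H ∈ A_n[t] there exists a unique (Q_1,...,Q_r,R) ∈ A_n[t]^{r+1} such that H = Q_1P_1 + ... + Q_rP_r + R, with exp(P_i) + N(Q_i) ⊆ Δ_i for each i, and N(R) ⊆ Δ̄. -/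

import Mathlib

/-- The index set of normal monomials `x^α D^β` of the Weyl algebra `A_n(K)`. -/
abbrev WMon (n : ℕ) := (Fin n → ℕ) × (Fin n → ℕ)

/-- The normal monomial `x^α D^β`. -/
def wmono {A : Type*} [Ring A] {n : ℕ} (x D : Fin n → A) (ab : WMon n) : A :=
  (List.ofFn fun i => x i ^ ab.1 i).prod * (List.ofFn fun i => D i ^ ab.2 i).prod

/-- A presentation of the Weyl algebra `A_n(K)`: an associative `K`-algebra `A` with
generators `x_i, D_i` satisfying `[x_i,x_j] = [D_i,D_j] = 0`, `[D_i,x_j] = δ_{ij}`,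
such that the normal monomials `x^α D^β` form a `K`-basis. -/
structure WeylData (K : Type*) [Field K] (n : ℕ) (A : Type*) [Ring A] [Algebra K A] where
  x : Fin n → A
  D : Fin n → A
  hxx : ∀ i j, x i * x j = x j * x i
  hDD : ∀ i j, D i * D j = D j * D i
  hDx : ∀ i j, D i * x j = x j * D i + (if i = j then 1 else 0)
  basis : Module.Basis (WMon n) K A
  basis_eq : ∀ ab, basis ab = wmono x D ab

/-- The Newton diagram of an operator. -/
noncomputable def ND {K : Type*} [Field K] {n : ℕ} {A : Type*} [Ring A] [Algebra K A]
    (W : WeylData K n A) (P : A) : Finset (WMon n) := (W.basis.repr P).support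

/-- An order function on the Weyl algebra, with values in `ℤ ∪ {-∞} = WithBot ℤ`. -/
structure IsOrderFunction (K : Type*) [Field K] {A : Type*} [Ring A] [Algebra K A]
    (δ : A → WithBot ℤ) : Prop where
  scalar : ∀ c : K, c ≠ 0 → δ (algebraMap K A c) = 0
  bot_iff : ∀ P : A, δ P = ⊥ ↔ P = 0
  add_le : ∀ P Q : A, δ (P + Q) ≤ max (δ P) (δ Q)
  mul : ∀ P Q : A, δ (P * Q) = δ P + δ Q

/-- An admissible order function: an order function such that `δ(P)` is the maximum of
`δ(x^α D^β)` over the Newton diagram of `P`. -/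
def IsAdmissible {K : Type*} [Field K] {n : ℕ} {A : Type*} [Ring A] [Algebra K A]
    (W : WeylData K n A) (δ : A → WithBot ℤ) : Prop :=
  IsOrderFunction K δ ∧
    ∀ P : A, P ≠ 0 → δ P = (ND W P).sup fun ab => δ (wmono W.x W.D ab)

/-- A well monomial ordering: an irreflexive, transitive, total relation, compatible with
addition, which is a well-ordering. -/
def WellMonomialOrdering {σ : Type*} [AddCommMonoid σ] (r : σ → σ → Prop) : Prop :=
  (∀ a, ¬ r a a) ∧ (∀ a b c, r a b → r b c → r a c) ∧
    (∀ a b, a ≠ b → r a b ∨ r b a) ∧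
    (∀ a b c, r a b → r (a + c) (b + c)) ∧ WellFounded r

/-- The monomial ordering `≺_δ` refining the admissible order function `δ` by a fixed
monomial ordering `r`. -/
def rdelta {K : Type*} [Field K] {n : ℕ} {A : Type*} [Ring A] [Algebra K A]
    (W : WeylData K n A) (δ : A → WithBot ℤ) (r : WMon n → WMon n → Prop) :
    WMon n → WMon n → Prop := fun a b =>
  δ (wmono W.x W.D a) < δ (wmono W.x W.D b) ∨
    (δ (wmono W.x W.D a) = δ (wmono W.x W.D b) ∧ r a b)

/-- `e` is the maximal element (exponent) of the Newton diagram of `P` w.r.t. `rd`. -/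
def IsExp {K : Type*} [Field K] {n : ℕ} {A : Type*} [Ring A] [Algebra K A]
    (W : WeylData K n A) (rd : WMon n → WMon n → Prop) (P : A) (e : WMon n) : Prop :=
  e ∈ ND W P ∧ ∀ f ∈ ND W P, f ≠ e → rd f e

/-- Index set of monomials `t^k x^α D^β` of the homogenised Weyl algebra. -/
abbrev HMon (n : ℕ) := ℕ × WMon n

/-- A presentation of the homogenised Weyl algebra `A_n[t]`: generators `t, x_i, D_i` with
`t` commuting with the `x_i, D_i`, `[x_i,x_j] = [D_i,D_j] = 0`, `[D_i,x_j] = δ_{ij} t²`,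
and the monomials `t^k x^α D^β` forming a `K`-basis. -/
structure HWeylData (K : Type*) [Field K] (n : ℕ) (B : Type*) [Ring B] [Algebra K B] where
  t : B
  x : Fin n → B
  D : Fin n → B
  htx : ∀ i, t * x i = x i * t
  htD : ∀ i, t * D i = D i * t
  hxx : ∀ i j, x i * x j = x j * x i
  hDD : ∀ i j, D i * D j = D j * D i
  hDx : ∀ i j, D i * x j = x j * D i + (if i = j then t ^ 2 else 0)
  basis : Module.Basis (HMon n) K B
  basis_eq : ∀ v, basis v = t ^ v.1 * wmono x D v.2

/-- Total degree `|α| + |β|` of a monomial of the Weyl algebra. -/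
def wdeg {n : ℕ} (ab : WMon n) : ℕ := (∑ i, ab.1 i) + (∑ i, ab.2 i)

/-- The total order `ord^T(P)` of an operator `P`. -/
noncomputable def ordT {K : Type*} [Field K] {n : ℕ} {A : Type*} [Ring A] [Algebra K A]
    (W : WeylData K n A) (P : A) : ℕ := (ND W P).sup wdeg

/-- The Newton diagram of an element of the homogenised Weyl algebra. -/
noncomputable def NDH {K : Type*} [Field K] {n : ℕ} {B : Type*} [Ring B] [Algebra K B]
    (V : HWeylData K n B) (H : B) : Finset (HMon n) := (V.basis.repr H).support

/-- The homogenisation `h(P) = Σ p_{αβ} t^{ord^T(P)-|α|-|β|} x^α D^β` of an operator. -/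
noncomputable def homog {K : Type*} [Field K] {n : ℕ} {A B : Type*} [Ring A] [Algebra K A]
    [Ring B] [Algebra K B] (W : WeylData K n A) (V : HWeylData K n B) (P : A) : B :=
  ∑ ab ∈ ND W P,
    W.basis.repr P ab • (V.t ^ (ordT W P - wdeg ab) * wmono V.x V.D ab)

/-- The dehomogenisation `H|_{t=1}` of an element of the homogenised Weyl algebra. -/
noncomputable def dehom {K : Type*} [Field K] {n : ℕ} {A B : Type*} [Ring A] [Algebra K A]
    [Ring B] [Algebra K B] (W : WeylData K n A) (V : HWeylData K n B) (H : B) : A :=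
  ∑ v ∈ NDH V H, V.basis.repr H v • wmono W.x W.D v.2

/-- `H` is homogeneous of degree `d` in `A_n[t]` (degree of `t^k x^α D^β` is `k+|α|+|β|`). -/
def IsHomogOfDeg {K : Type*} [Field K] {n : ℕ} {B : Type*} [Ring B] [Algebra K B]
    (V : HWeylData K n B) (H : B) (d : ℕ) : Prop :=
  ∀ v ∈ NDH V H, v.1 + wdeg v.2 = d

/-- Total degree of a monomial of `A_n[t]`. -/
def hdeg {n : ℕ} (v : HMon n) : ℕ := v.1 + wdeg v.2

/-- The well monomial ordering `⊲` on `ℕ^{2n+1}`: compare first by total degree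
`k + |α| + |β|`, then by `≺_δ` on `(α,β)`. -/
def rT {K : Type*} [Field K] {n : ℕ} {A : Type*} [Ring A] [Algebra K A]
    (W : WeylData K n A) (δ : A → WithBot ℤ) (r : WMon n → WMon n → Prop) :
    HMon n → HMon n → Prop := fun a b =>
  hdeg a < hdeg b ∨ (hdeg a = hdeg b ∧ rdelta W δ r a.2 b.2)

/-- `E` is the maximal element of the Newton diagram of `H ∈ A_n[t]` w.r.t. `rd`. -/
def IsExpH {K : Type*} [Field K] {n : ℕ} {B : Type*} [Ring B] [Algebra K B]
    (V : HWeylData K n B) (rd : HMon n → HMon n → Prop) (H : B) (E : HMon n) : Prop :=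
  E ∈ NDH V H ∧ ∀ F ∈ NDH V H, F ≠ E → rd F E

/-- The translated cone `e + ℕ^{2n+1}`. -/
def expCone {n : ℕ} (e : HMon n) : Set (HMon n) := {v | ∃ γ, v = e + γ}

/-!
The monomials `t^k x^α D^β` form a basis of `A_n[t]` indexed by `ℕ^{2n+1}`, and `⊲` is a
well-ordering compatible with addition for which the product of two monomials has leading
exponent the sum of their exponents: the only correction terms come from
`D_j x_j = x_j D_j + t²`, and `t²` has the same total degree as `x_j D_j` but is `⊲`-smaller,
because `δ(x_j) + δ(D_j) ≥ δ([D_j, x_j]) = 0` and `0 ≺ (e_j, e_j)`.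
Hence `exp(Q P) = exp(Q) + exp(P)`.

Division then works in any algebra with such a basis. The linear map `(Q, R) ↦ Σ Qᵢ Pᵢ + R`,
restricted to tuples whose Newton diagrams lie in the prescribed cells, is onto: by
well-founded induction on `⊲`, a monomial `E` lying in no cone is its own remainder, and
otherwise `E = eᵢ + γ` for a least `i`, and the monomial with exponent `γ` times `Pᵢ` is a
nonzero multiple of the monomial `E` plus `⊲`-smaller terms. It is injective since the leading
exponents of the nonzero summands `Qᵢ Pᵢ` and `R` lie in pairwise disjoint cells, so the largest
of them cannot cancel.
-/

open Function Module Submodule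

theorem List.prod_ofFn_pow_mul_of_commute {G : Type*} [Monoid G] :
    ∀ {n : ℕ} {g : Fin n → G}, (∀ i j, Commute (g i) (g j)) → ∀ (α : Fin n → ℕ) (j : Fin n),
      (List.ofFn fun i => g i ^ α i).prod * g j =
        (List.ofFn fun i => g i ^ (α + Pi.single j 1 : Fin n → ℕ) i).prod
  | 0, _, _, _, j => j.elim0
  | n + 1, g, hg, α, j => by
    have hcomm : Commute (List.ofFn fun i : Fin n => g i.succ ^ α i.succ).prod (g 0) :=
      Commute.list_prod_left _ _ fun y hy => by
        obtain ⟨i, rfl⟩ := List.mem_ofFn.1 hy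
        exact (hg _ _).pow_left _
    simp only [List.ofFn_succ, List.prod_cons, mul_assoc]
    cases j using Fin.cases with
    | zero => simp [hcomm.eq, pow_succ, mul_assoc, Fin.succ_ne_zero]
    | succ j =>
      rw [List.prod_ofFn_pow_mul_of_commute (fun i j => hg i.succ j.succ) (fun i => α i.succ) j]
      simp [Pi.single_apply]

theorem Pi.induction_add_single_one {ι : Type*} [Finite ι] [DecidableEq ι]
    {p : (ι → ℕ) → Prop} (zero : p 0) (step : ∀ β i, p β → p (β + Pi.single i 1))
    (β : ι → ℕ) : p β := by
  suffices ∀ γ, p γ → p (γ + β) by simpa using this 0 zero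
  induction β using Pi.single_induction with
  | zero => simp
  | add f g hf hg => exact fun γ hγ => add_assoc γ f g ▸ hg _ (hf γ hγ)
  | single i m =>
    intro γ hγ
    induction m with
    | zero => simpa using hγ
    | succ m ih => rw [Pi.single_add, ← add_assoc]; exact step _ i ih

theorem rel_add_right_of_covariant {M : Type*} [AddCommMonoid M] {lt : M → M → Prop}
    [CovariantClass M M (· + ·) lt] {a a' : M} (h : lt a a') (c : M) : lt (a + c) (a' + c) := by
  simpa only [add_comm _ c] using CovariantClass.elim c h

section Partition
variable {M ι : Type*} [Add M]

def divisionCell [Preorder ι] (e : ι → M) (i : ι) : Set M :=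
  {v | ∃ γ, v = e i + γ} \ ⋃ j ∈ Set.Iio i, {v | ∃ γ, v = e j + γ}

def divisionRest (e : ι → M) : Set M := (⋃ i, {v | ∃ γ, v = e i + γ})ᶜ

variable [LinearOrder ι] {e : ι → M}

theorem disjoint_divisionCell {i j : ι} (h : i ≠ j) :
    Disjoint (divisionCell e i) (divisionCell e j) := by
  wlog hij : i < j generalizing i j
  · exact (this h.symm (lt_of_le_of_ne (not_lt.1 hij) h.symm)).symm
  exact Set.disjoint_left.2 fun _ hi hj => hj.2 (Set.mem_biUnion hij hi.1)

theorem disjoint_divisionRest_divisionCell (i : ι) :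
    Disjoint (divisionRest e) (divisionCell e i) :=
  Set.disjoint_left.2 fun _ hv hi => hv (Set.mem_iUnion.2 ⟨i, hi.1⟩)

theorem pairwise_disjoint_divisionRest_divisionCell :
    Pairwise (Disjoint on fun k : Option ι => k.elim (divisionRest e) (divisionCell e)) := by
  rintro (_ | i) (_ | j) h
  · exact absurd rfl h
  · exact disjoint_divisionRest_divisionCell j
  · exact (disjoint_divisionRest_divisionCell i).symm
  · exact disjoint_divisionCell fun hij => h (congrArg some hij)

end Partition

def divisionMap (K : Type*) {B ι : Type*} [Field K] [Ring B] [Algebra K B] [Fintype ι]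
    (P : ι → B) : (ι → B) × B →ₗ[K] B where
  toFun QR := ∑ i, QR.1 i * P i + QR.2
  map_add' _ _ := by simp only [Prod.fst_add, Prod.snd_add, Pi.add_apply, add_mul,
    Finset.sum_add_distrib]; abel
  map_smul' _ _ := by simp [Finset.smul_sum]

namespace Module.Basis

variable {K B M ι : Type*} [Field K] [Ring B] [Algebra K B]

section Order
variable (b : Basis M K B) (lt : M → M → Prop)

def lowerSpan (c : M) : Submodule K B := span K (b '' {u | lt u c})

def IsLeadingExp (P : B) (e : M) : Prop :=
  e ∈ (b.repr P).support ∧ ∀ f ∈ (b.repr P).support, f ≠ e → lt f e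

variable {b lt} {P Q x : B} {c e f : M}

theorem mem_lowerSpan_iff : x ∈ b.lowerSpan lt c ↔ ∀ u ∈ (b.repr x).support, lt u c :=
  b.mem_span_image

theorem basis_mem_lowerSpan {u : M} (h : lt u c) : b u ∈ b.lowerSpan lt c :=
  subset_span ⟨u, h, rfl⟩

theorem lowerSpan_mono [IsTrans M lt] {c' : M} (h : lt c c') :
    b.lowerSpan lt c ≤ b.lowerSpan lt c' :=
  span_mono (Set.image_mono fun _ hu => _root_.trans hu h)

theorem IsLeadingExp.ne_zero (h : b.IsLeadingExp lt P e) : P ≠ 0 := by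
  rintro rfl
  simpa using h.1

theorem IsLeadingExp.sub_mem_lowerSpan (h : b.IsLeadingExp lt P e) :
    P - b.repr P e • b e ∈ b.lowerSpan lt e := by
  refine mem_lowerSpan_iff.2 fun u hu => ?_
  have hue : u ≠ e := by rintro rfl; simp at hu
  exact h.2 u (by simpa [Finsupp.single_apply, Ne.symm hue] using hu) hue

theorem isLeadingExp_of_sub_mem [Std.Irrefl lt] {a : K} (ha : a ≠ 0)
    (h : P - a • b e ∈ b.lowerSpan lt e) : b.IsLeadingExp lt P e := by
  have hcoeff : ∀ u, ¬ lt u e → b.repr P u = Finsupp.single e a u := fun u hu => by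
    by_contra hne
    exact hu (mem_lowerSpan_iff.1 h u (by simpa [sub_eq_zero, Finsupp.single_apply] using hne))
  refine ⟨by simpa [hcoeff e (irrefl e)] using ha, fun u hu hue => ?_⟩
  by_contra hlt
  simp_all [hcoeff u hlt]

theorem eq_zero_of_sum_eq_zero_of_disjoint [IsWellOrder M lt] {κ : Type*} [Fintype κ]
    {y : κ → B} {S : κ → Set M} (hS : Pairwise (Disjoint on S))
    (hy : ∀ k, y k ≠ 0 → ∃ E ∈ S k, b.IsLeadingExp lt (y k) E) (hsum : ∑ k, y k = 0) (k : κ) :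
    y k = 0 := by
  classical
  by_contra hk
  have : Nonempty M := ⟨(hy k hk).choose⟩
  choose! E hES hE using hy
  let := IsWellOrder.linearOrder lt
  obtain ⟨k₀, hk₀, hmax⟩ :=
    (Finset.univ.filter (y · ≠ 0)).exists_max_image E ⟨k, by simpa using hk⟩
  simp only [Finset.mem_filter, Finset.mem_univ, true_and] at hk₀ hmax
  have hcoeff : b.repr (∑ k, y k) (E k₀) = b.repr (y k₀) (E k₀) := by
    rw [map_sum, Finsupp.finsetSum_apply]
    refine Finset.sum_eq_single k₀ (fun l _ hl => ?_) (by simp)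
    by_contra hne
    have hyl : y l ≠ 0 := by rintro h; simp [h] at hne
    have hEl : E l ≠ E k₀ := fun h => Set.disjoint_left.1 (hS hl) (hES l hyl) (h ▸ hES k₀ hk₀)
    exact asymm ((hmax l hyl).resolve_left hEl)
      ((hE l hyl).2 (E k₀) (Finsupp.mem_support_iff.2 hne) hEl.symm)
  rw [hsum, map_zero] at hcoeff
  exact Finsupp.mem_support_iff.1 (hE k₀ hk₀).1 (by simpa using hcoeff.symm)

variable (b lt) in
theorem exists_isLeadingExp [IsWellOrder M lt] (hP : P ≠ 0) : ∃ e, b.IsLeadingExp lt P e := by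
  let := IsWellOrder.linearOrder lt
  obtain ⟨e, he, hmax⟩ := (b.repr P).support.exists_max_image id
    (Finsupp.support_nonempty_iff.2 (by simpa using hP))
  exact ⟨e, he, fun f hf hfe => (hmax f hf).resolve_left hfe⟩

end Order

variable [AddCommMonoid M]

section RightMul
variable (b : Basis M K B) (lt : M → M → Prop)

def IsLeadingRightMul (g : B) (ε : M) : Prop :=
  ∀ u, b u * g - b (u + ε) ∈ b.lowerSpan lt (u + ε)

variable {b lt} {g h x : B} {c ε η : M}

theorem isLeadingRightMul_of_eq (h : ∀ u, b u * g = b (u + ε)) : b.IsLeadingRightMul lt g ε :=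
  fun u => by simp [h u]

theorem isLeadingRightMul_one : b.IsLeadingRightMul lt 1 0 :=
  isLeadingRightMul_of_eq fun u => by simp

variable [IsTrans M lt] [CovariantClass M M (· + ·) lt]

theorem IsLeadingRightMul.mul_mem_lowerSpan (hg : b.IsLeadingRightMul lt g ε)
    (hx : x ∈ b.lowerSpan lt c) : x * g ∈ b.lowerSpan lt (c + ε) := by
  have : b.lowerSpan lt c ≤ (b.lowerSpan lt (c + ε)).comap (LinearMap.mulRight K g) := by
    refine span_le.2 ?_
    rintro _ ⟨u, hu, rfl⟩
    have hlt : lt (u + ε) (c + ε) := rel_add_right_of_covariant hu ε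
    simpa using add_mem (lowerSpan_mono hlt (hg u)) (basis_mem_lowerSpan hlt)
  exact this hx

theorem IsLeadingRightMul.mul (hg : b.IsLeadingRightMul lt g ε)
    (hh : b.IsLeadingRightMul lt h η) : b.IsLeadingRightMul lt (g * h) (ε + η) := fun u => by
  have hsplit : b u * (g * h) - b (u + (ε + η)) =
      (b u * g - b (u + ε)) * h + (b (u + ε) * h - b (u + ε + η)) := by
    rw [add_assoc, sub_mul, mul_assoc]; abel
  rw [hsplit, ← add_assoc]
  exact add_mem (hh.mul_mem_lowerSpan (hg u)) (hh (u + ε))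

theorem IsLeadingRightMul.pow (hg : b.IsLeadingRightMul lt g ε) :
    ∀ k : ℕ, b.IsLeadingRightMul lt (g ^ k) (k • ε)
  | 0 => by simpa using isLeadingRightMul_one
  | k + 1 => by simpa [pow_succ, succ_nsmul] using (hg.pow k).mul hg

theorem isLeadingRightMul_prod_ofFn {n : ℕ} {g : Fin n → B} {ε : Fin n → M}
    (hg : ∀ i, b.IsLeadingRightMul lt (g i) (ε i)) :
    b.IsLeadingRightMul lt (List.ofFn g).prod (∑ i, ε i) := by
  induction n with
  | zero => simpa using isLeadingRightMul_one
  | succ n ih =>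
    simpa [List.ofFn_succ, Fin.sum_univ_succ] using (hg 0).mul (ih fun i => hg i.succ)

end RightMul

section Domain
variable (b : Basis M K B)

def divisionDomain [Preorder ι] (e : ι → M) : Submodule K ((ι → B) × B) :=
  (Submodule.pi Set.univ fun i => span K (b '' {v | e i + v ∈ divisionCell e i})).prod
    (span K (b '' divisionRest e))

variable {b}

theorem mem_divisionDomain_iff [Preorder ι] {e : ι → M} {x : (ι → B) × B} :
    x ∈ b.divisionDomain e ↔
      (∀ i, ∀ v ∈ (b.repr (x.1 i)).support, e i + v ∈ divisionCell e i) ∧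
        ∀ v ∈ (b.repr x.2).support, v ∈ divisionRest e := by
  simp only [divisionDomain, mem_prod, mem_pi, Set.mem_univ, true_implies, b.mem_span_image]
  rfl

theorem basis_mul_mem_map_divisionDomain [Fintype ι] [LinearOrder ι] {P : ι → B} {e : ι → M}
    {i : ι} {γ : M} (h : e i + γ ∈ divisionCell e i) :
    b γ * P i ∈ (b.divisionDomain e).map (divisionMap K P) := by
  classical
  refine ⟨(Pi.single i (b γ), 0), ⟨mem_pi.2 fun j _ => ?_, zero_mem _⟩, ?_⟩
  · rcases eq_or_ne j i with rfl | hj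
    · have hγ : b γ ∈ span K (b '' {v | e j + v ∈ divisionCell e j}) :=
        subset_span ⟨γ, h, rfl⟩
      simpa using hγ
    · simp [hj]
  · simp [divisionMap, Pi.single_apply]

theorem basis_mem_map_divisionDomain [Fintype ι] [Preorder ι] {P : ι → B} {e : ι → M} {E : M}
    (h : E ∈ divisionRest e) : b E ∈ (b.divisionDomain e).map (divisionMap K P) :=
  ⟨(0, b E), ⟨zero_mem _, subset_span ⟨E, h, rfl⟩⟩, by simp [divisionMap]⟩

end Domain

section Division
variable {b : Basis M K B} {lt : M → M → Prop} [IsWellOrder M lt]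
  [CovariantClass M M (· + ·) lt] (hmul : ∀ w, b.IsLeadingRightMul lt (b w) w)
  {P Q x : B} {c e f : M}
include hmul

theorem basis_mul_mem_lowerSpan (v : M) (hx : x ∈ b.lowerSpan lt c) :
    b v * x ∈ b.lowerSpan lt (v + c) := by
  have : b.lowerSpan lt c ≤ (b.lowerSpan lt (v + c)).comap (LinearMap.mulLeft K (b v)) := by
    refine span_le.2 ?_
    rintro _ ⟨u, hu, rfl⟩
    have hlt : lt (v + u) (v + c) := CovariantClass.elim v hu
    simpa using add_mem (lowerSpan_mono hlt (hmul u v)) (basis_mem_lowerSpan hlt)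
  exact this hx

theorem IsLeadingExp.basis_mul_sub_mem (hP : b.IsLeadingExp lt P e) (v : M) :
    b v * P - b.repr P e • b (v + e) ∈ b.lowerSpan lt (v + e) := by
  have hsplit : b v * P - b.repr P e • b (v + e) =
      b v * (P - b.repr P e • b e) + b.repr P e • (b v * b e - b (v + e)) := by
    rw [mul_sub, mul_smul_comm, smul_sub]; abel
  rw [hsplit]
  exact add_mem (basis_mul_mem_lowerSpan hmul v hP.sub_mem_lowerSpan) (smul_mem _ _ (hmul e v))

theorem IsLeadingExp.mul_mem_lowerSpan (hP : b.IsLeadingExp lt P e)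
    (hx : x ∈ b.lowerSpan lt c) : x * P ∈ b.lowerSpan lt (c + e) := by
  have : b.lowerSpan lt c ≤ (b.lowerSpan lt (c + e)).comap (LinearMap.mulRight K P) := by
    refine span_le.2 ?_
    rintro _ ⟨u, hu, rfl⟩
    have hlt : lt (u + e) (c + e) := rel_add_right_of_covariant hu e
    simpa using add_mem (lowerSpan_mono hlt (hP.basis_mul_sub_mem hmul u))
      (smul_mem _ (b.repr P e) (basis_mem_lowerSpan hlt))
  exact this hx

theorem IsLeadingExp.mul (hQ : b.IsLeadingExp lt Q f) (hP : b.IsLeadingExp lt P e) :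
    b.IsLeadingExp lt (Q * P) (f + e) := by
  refine isLeadingExp_of_sub_mem (mul_ne_zero (Finsupp.mem_support_iff.1 hQ.1)
    (Finsupp.mem_support_iff.1 hP.1)) ?_
  have hsplit : Q * P - (b.repr Q f * b.repr P e) • b (f + e) =
      (Q - b.repr Q f • b f) * P + b.repr Q f • (b f * P - b.repr P e • b (f + e)) := by
    rw [sub_mul, smul_mul_assoc, smul_sub, smul_smul]; abel
  rw [hsplit]
  exact add_mem (hP.mul_mem_lowerSpan hmul hQ.sub_mem_lowerSpan)
    (smul_mem _ _ (hP.basis_mul_sub_mem hmul f))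

theorem map_divisionMap_divisionDomain_eq_top [Fintype ι] [LinearOrder ι] {P : ι → B} {e : ι → M}
    (hexp : ∀ i, b.IsLeadingExp lt (P i) (e i)) :
    (b.divisionDomain e).map (divisionMap K P) = ⊤ := by
  set D := (b.divisionDomain e).map (divisionMap K P)
  have hbasis : ∀ E, b E ∈ D := fun E => by
    induction E using IsWellFounded.induction lt with
    | _ E ih =>
    have hlow : b.lowerSpan lt E ≤ D := span_le.2 fun _ ⟨u, hu, hbu⟩ => hbu ▸ ih u hu
    by_cases hE : ∃ i, ∃ γ, E = e i + γ
    · obtain ⟨i, ⟨γ, rfl⟩, hmin⟩ := wellFounded_lt.has_min {i | ∃ γ, E = e i + γ} hE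
      have hcell : e i + γ ∈ divisionCell e i :=
        ⟨⟨γ, rfl⟩, by simpa using fun j hj h => hmin j h hj⟩
      have hlead := (hexp i).basis_mul_sub_mem hmul γ
      rw [add_comm] at hlead
      have : b.repr (P i) (e i) • b (e i + γ) ∈ D := by
        simpa only [sub_sub_cancel] using
          sub_mem (basis_mul_mem_map_divisionDomain hcell) (hlow hlead)
      exact (smul_mem_iff D (Finsupp.mem_support_iff.1 (hexp i).1)).1 this
    · exact basis_mem_map_divisionDomain (by simpa [divisionRest, eq_comm] using hE)
  rw [eq_top_iff, ← b.span_eq, span_le]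
  rintro _ ⟨E, rfl⟩
  exact hbasis E

theorem eq_zero_of_divisionMap_eq_zero [Fintype ι] [LinearOrder ι] {P : ι → B} {e : ι → M}
    (hexp : ∀ i, b.IsLeadingExp lt (P i) (e i)) {x : (ι → B) × B}
    (hx : x ∈ b.divisionDomain e) (h0 : divisionMap K P x = 0) : x = 0 := by
  obtain ⟨hQ, hR⟩ := mem_divisionDomain_iff.1 hx
  let y : Option ι → B := fun k => k.elim x.2 fun i => x.1 i * P i
  have hy : ∀ k, y k ≠ 0 → ∃ E ∈ k.elim (divisionRest e) (divisionCell e),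
      b.IsLeadingExp lt (y k) E := by
    rintro (_ | i) hk
    · obtain ⟨E, hE⟩ := b.exists_isLeadingExp lt hk
      exact ⟨E, hR E hE.1, hE⟩
    · obtain ⟨f, hf⟩ := b.exists_isLeadingExp lt (left_ne_zero_of_mul hk)
      exact ⟨f + e i, add_comm (e i) f ▸ hQ i f hf.1, hf.mul hmul (hexp i)⟩
  have hsum : ∑ k, y k = 0 := by rw [Fintype.sum_option, add_comm]; exact h0
  have hzero :=
    eq_zero_of_sum_eq_zero_of_disjoint pairwise_disjoint_divisionRest_divisionCell hy hsum
  refine Prod.ext (funext fun i => ?_) (hzero none)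
  by_contra hi
  obtain ⟨f, hf⟩ := b.exists_isLeadingExp lt hi
  exact (hf.mul hmul (hexp i)).ne_zero (hzero (some i))

theorem existsUnique_division [Fintype ι] [LinearOrder ι] {P : ι → B} {e : ι → M}
    (hexp : ∀ i, b.IsLeadingExp lt (P i) (e i)) (H : B) :
    ∃! QR : (ι → B) × B,
      H = ∑ i, QR.1 i * P i + QR.2 ∧
      (∀ i, ∀ v ∈ (b.repr (QR.1 i)).support, e i + v ∈ divisionCell e i) ∧
      ∀ v ∈ (b.repr QR.2).support, v ∈ divisionRest e := by
  simp only [← mem_divisionDomain_iff]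
  have hH : H ∈ (b.divisionDomain e).map (divisionMap K P) := by
    rw [map_divisionMap_divisionDomain_eq_top hmul hexp]
    exact mem_top
  obtain ⟨x, hx, hxH⟩ := hH
  refine ⟨x, ⟨hxH.symm, hx⟩, fun y ⟨hyH, hy⟩ => sub_eq_zero.1 ?_⟩
  refine eq_zero_of_divisionMap_eq_zero hmul hexp (sub_mem hy hx) ?_
  rw [map_sub, sub_eq_zero]
  exact hyH.symm.trans hxH.symm

end Division

end Module.Basis

namespace HWeylData

variable {K : Type*} [Field K] {n : ℕ} {B : Type*} [Ring B] [Algebra K B] (V : HWeylData K n B)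

theorem commute_t_wmono (a : WMon n) : Commute V.t (wmono V.x V.D a) := by
  refine (Commute.list_prod_right _ _ fun y hy => ?_).mul_right
    (Commute.list_prod_right _ _ fun y hy => ?_) <;>
  obtain ⟨i, rfl⟩ := List.mem_ofFn.1 hy
  · exact Commute.pow_right (V.htx i) _
  · exact Commute.pow_right (V.htD i) _

theorem basis_mul_t_pow (u : HMon n) (m : ℕ) : V.basis u * V.t ^ m = V.basis (u + (m, 0)) := by
  rw [V.basis_eq, V.basis_eq, mul_assoc, ← ((V.commute_t_wmono u.2).pow_left m).eq, ← mul_assoc,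
    ← pow_add]
  simp

theorem basis_mul_D (u : HMon n) (j : Fin n) :
    V.basis u * V.D j = V.basis (u + (0, (0, Pi.single j 1))) := by
  rw [V.basis_eq, V.basis_eq, wmono, wmono, mul_assoc, mul_assoc,
    List.prod_ofFn_pow_mul_of_commute V.hDD]
  simp

theorem basis_mul_x_of_eq_zero (k : ℕ) (α : Fin n → ℕ) (j : Fin n) :
    V.basis (k, (α, 0)) * V.x j = V.basis (k, (α + Pi.single j 1, 0)) := by
  simp [V.basis_eq, wmono, mul_assoc, List.prod_ofFn_pow_mul_of_commute V.hxx]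

end HWeylData

section OrderFunction
variable {K : Type*} [Field K] {n : ℕ} {A : Type*} [Ring A] [Algebra K A] {δ : A → WithBot ℤ}

namespace IsOrderFunction
variable (hδ : IsOrderFunction K δ)
include hδ

theorem map_one : δ 1 = 0 := by
  simpa using hδ.scalar 1 one_ne_zero

theorem map_neg (P : A) : δ (-P) = δ P := by
  rw [neg_eq_neg_one_mul, ← _root_.map_one (algebraMap K A), ← _root_.map_neg, hδ.mul,
    hδ.scalar _ (neg_ne_zero.2 one_ne_zero), zero_add]

theorem map_list_prod (l : List A) : δ l.prod = (l.map δ).sum := by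
  induction l with
  | nil => exact hδ.map_one
  | cons P l ih => rw [List.prod_cons, hδ.mul, ih, List.map_cons, List.sum_cons]

theorem map_pow (P : A) (k : ℕ) : δ (P ^ k) = k • δ P := by
  induction k with
  | zero => simpa using hδ.map_one
  | succ k ih => rw [pow_succ, hδ.mul, ih, succ_nsmul]

theorem map_wmono (W : WeylData K n A) (a : WMon n) :
    δ (wmono W.x W.D a) = ∑ i, a.1 i • δ (W.x i) + ∑ i, a.2 i • δ (W.D i) := by
  simp [wmono, hδ.mul, hδ.map_list_prod, List.sum_ofFn, hδ.map_pow]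

theorem map_wmono_add (W : WeylData K n A) (a c : WMon n) :
    δ (wmono W.x W.D (a + c)) = δ (wmono W.x W.D a) + δ (wmono W.x W.D c) := by
  simp only [hδ.map_wmono, Prod.fst_add, Prod.snd_add, Pi.add_apply, add_nsmul,
    Finset.sum_add_distrib]
  abel

theorem map_wmono_ne_bot (W : WeylData K n A) (a : WMon n) : δ (wmono W.x W.D a) ≠ ⊥ := by
  rw [Ne, hδ.bot_iff, ← W.basis_eq]
  exact W.basis.ne_zero a

theorem map_x_add_map_D_nonneg (W : WeylData K n A) (i : Fin n) :
    0 ≤ δ (W.x i) + δ (W.D i) := by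
  have hone : (1 : A) = W.D i * W.x i + -(W.x i * W.D i) := by simp [W.hDx]
  calc (0 : WithBot ℤ) = δ 1 := hδ.map_one.symm
    _ ≤ max (δ (W.D i * W.x i)) (δ (-(W.x i * W.D i))) := hone ▸ hδ.add_le _ _
    _ = δ (W.x i) + δ (W.D i) := by rw [hδ.map_neg, hδ.mul, hδ.mul, add_comm, max_self]

end IsOrderFunction

end OrderFunction

theorem WellMonomialOrdering.rel_zero {σ : Type*} [AddCommMonoid σ] {r : σ → σ → Prop}
    (hr : WellMonomialOrdering r) {c : σ} (hc : c ≠ 0) : r 0 c := by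
  obtain ⟨-, -, htotal, hadd, hwf⟩ := hr
  refine (htotal 0 c hc.symm).resolve_right fun hc0 => ?_
  have : IsWellFounded σ r := ⟨hwf⟩
  obtain ⟨k, hk⟩ := WellFounded.not_rel_apply_succ (r := r) fun k : ℕ => k • c
  exact hk (by simpa [succ_nsmul, add_comm] using hadd c 0 (k • c) hc0)

section MonomialOrder
variable {K : Type*} [Field K] {n : ℕ} {A : Type*} [Ring A] [Algebra K A]
  {W : WeylData K n A} {δ : A → WithBot ℤ} {r : WMon n → WMon n → Prop}

theorem rdelta_isStrictOrder (hr : WellMonomialOrdering r) :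
    IsStrictOrder (WMon n) (rdelta W δ r) where
  irrefl a := by
    rintro (h | ⟨-, h⟩)
    exacts [lt_irrefl _ h, hr.1 a h]
  trans a b c := by
    rintro (h₁ | ⟨h₁, h₁'⟩) (h₂ | ⟨h₂, h₂'⟩)
    · exact Or.inl (h₁.trans h₂)
    · exact Or.inl (h₂ ▸ h₁)
    · exact Or.inl (h₁ ▸ h₂)
    · exact Or.inr ⟨h₁.trans h₂, hr.2.1 _ _ _ h₁' h₂'⟩

theorem rdelta_total (hr : WellMonomialOrdering r) {a b : WMon n} (hab : a ≠ b) :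
    rdelta W δ r a b ∨ rdelta W δ r b a := by
  rcases lt_trichotomy (δ (wmono W.x W.D a)) (δ (wmono W.x W.D b)) with h | h | h
  · exact Or.inl (Or.inl h)
  · exact (hr.2.2.1 a b hab).imp (fun h' => Or.inr ⟨h, h'⟩) fun h' => Or.inr ⟨h.symm, h'⟩
  · exact Or.inr (Or.inl h)

theorem rdelta_add_right (hδ : IsOrderFunction K δ) (hr : WellMonomialOrdering r)
    {a b : WMon n} (h : rdelta W δ r a b) (c : WMon n) : rdelta W δ r (a + c) (b + c) := by
  unfold rdelta
  rw [hδ.map_wmono_add, hδ.map_wmono_add]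
  rcases h with h | ⟨h, h'⟩
  · exact Or.inl (WithBot.add_lt_add_right (hδ.map_wmono_ne_bot W c) h)
  · exact Or.inr ⟨by rw [h], hr.2.2.2.1 a b c h'⟩

theorem rdelta_zero_diag (hδ : IsOrderFunction K δ) (hr : WellMonomialOrdering r) (j : Fin n) :
    rdelta W δ r 0 (Pi.single j 1, Pi.single j 1) := by
  have hdiag : δ (wmono W.x W.D (Pi.single j 1, Pi.single j 1)) = δ (W.x j) + δ (W.D j) := by
    simp [hδ.map_wmono, Pi.single_apply]
  have hzero : δ (wmono W.x W.D 0) = 0 := by simp [hδ.map_wmono]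
  unfold rdelta
  rw [hdiag, hzero]
  rcases (hδ.map_x_add_map_D_nonneg W j).lt_or_eq with h | h
  · exact Or.inl h
  · exact Or.inr ⟨h, hr.rel_zero fun h0 => by simpa using congrFun (congrArg Prod.fst h0) j⟩

theorem hdeg_add (a b : HMon n) : hdeg (a + b) = hdeg a + hdeg b := by
  simp only [hdeg, wdeg, Prod.fst_add, Prod.snd_add, Pi.add_apply, Finset.sum_add_distrib]
  ring

theorem finite_hdeg_preimage (d : ℕ) : (hdeg ⁻¹' {d} : Set (HMon n)).Finite := by
  refine ((Set.finite_Iic d).prod ((Set.finite_Iic fun _ => d).prod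
    (Set.finite_Iic fun _ => d))).subset fun v hv => ?_
  simp only [Set.mem_preimage, Set.mem_singleton_iff, hdeg, wdeg] at hv
  refine ⟨show v.1 ≤ d by omega, fun i => ?_, fun i => ?_⟩
  · have := Finset.single_le_sum (fun k _ => Nat.zero_le (v.2.1 k)) (Finset.mem_univ i)
    show v.2.1 i ≤ d
    omega
  · have := Finset.single_le_sum (fun k _ => Nat.zero_le (v.2.2 k)) (Finset.mem_univ i)
    show v.2.2 i ≤ d
    omega

theorem rT_trichotomous (hr : WellMonomialOrdering r) {a b : HMon n}
    (hab : ¬ rT W δ r a b) (hba : ¬ rT W δ r b a) : a = b := by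
  have hdeg_eq : hdeg a = hdeg b := by
    by_contra h
    rcases Nat.lt_or_gt_of_ne h with h | h
    exacts [hab (Or.inl h), hba (Or.inl h)]
  have h2 : a.2 = b.2 := by
    by_contra h
    exact (rdelta_total hr h).elim (fun h => hab (Or.inr ⟨hdeg_eq, h⟩))
      fun h => hba (Or.inr ⟨hdeg_eq.symm, h⟩)
  have h1 : a.1 = b.1 := by simpa [hdeg, h2] using hdeg_eq
  exact Prod.ext h1 h2

theorem rT_wellFounded (hr : WellMonomialOrdering r) : WellFounded (rT W δ r) := by
  have := rdelta_isStrictOrder (W := W) (δ := δ) hr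
  exact (WellFounded.prod_lex_of_wellFoundedOn_fiber (rα := (· < ·)) (rβ := rdelta W δ r)
    (f := hdeg) (g := Prod.snd) wellFounded_lt.onFun
    fun d => (finite_hdeg_preimage d).wellFoundedOn).mono fun _ _ h => Prod.lex_def.2 h

theorem rT_isWellOrder (hr : WellMonomialOrdering r) : IsWellOrder (HMon n) (rT W δ r) where
  trichotomous _ _ := rT_trichotomous hr
  wf := rT_wellFounded hr

theorem rT_covariant (hδ : IsOrderFunction K δ) (hr : WellMonomialOrdering r) :
    CovariantClass (HMon n) (HMon n) (· + ·) (rT W δ r) where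
  elim c a b := by
    rintro (h | ⟨h, h'⟩)
    · exact Or.inl (by simp only [hdeg_add]; omega)
    · refine Or.inr ⟨by simp only [hdeg_add, h], ?_⟩
      simpa only [Prod.snd_add, add_comm c.2] using rdelta_add_right hδ hr h' c.2

theorem rT_t_sq_lt_x_mul_D (hδ : IsOrderFunction K δ) (hr : WellMonomialOrdering r) (j : Fin n) :
    rT W δ r (2, 0) (0, (Pi.single j 1, Pi.single j 1)) :=
  Or.inr ⟨by simp [hdeg, wdeg], rdelta_zero_diag hδ hr j⟩

end MonomialOrder

section LeadingMonomials
variable {K : Type*} [Field K] {n : ℕ} {A B : Type*} [Ring A] [Algebra K A] [Ring B] [Algebra K B]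
  {W : WeylData K n A} {V : HWeylData K n B} {δ : A → WithBot ℤ} {r : WMon n → WMon n → Prop}

theorem isLeadingRightMul_t_pow (m : ℕ) :
    V.basis.IsLeadingRightMul (rT W δ r) (V.t ^ m) (m, 0) :=
  Module.Basis.isLeadingRightMul_of_eq fun u => V.basis_mul_t_pow u m

theorem isLeadingRightMul_D (j : Fin n) :
    V.basis.IsLeadingRightMul (rT W δ r) (V.D j) (0, (0, Pi.single j 1)) :=
  Module.Basis.isLeadingRightMul_of_eq fun u => V.basis_mul_D u j

theorem isLeadingRightMul_x (hδ : IsOrderFunction K δ) (hr : WellMonomialOrdering r)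
    (j : Fin n) : V.basis.IsLeadingRightMul (rT W δ r) (V.x j) (0, (Pi.single j 1, 0)) := by
  have := rT_isWellOrder (W := W) (δ := δ) hr
  have := rT_covariant (W := W) hδ hr
  rintro ⟨k, α, β⟩
  induction β using Pi.induction_add_single_one with
  | zero => simp [V.basis_mul_x_of_eq_zero]
  | step β i ih =>
    set u : HMon n := (k, (α, β))
    set xe : HMon n := (0, (Pi.single j 1, 0))
    set De : HMon n := (0, (0, Pi.single i 1))
    have hu : ((k, (α, β + Pi.single i 1)) : HMon n) = u + De := by simp [u, De]
    have hsplit : V.basis (u + De) * V.x j - V.basis (u + De + xe) =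
        (V.basis u * V.x j - V.basis (u + xe)) * V.D i +
          V.basis u * (if i = j then V.t ^ 2 else 0) := by
      rw [← V.basis_mul_D, mul_assoc, V.hDx, mul_add, sub_mul, ← mul_assoc, V.basis_mul_D,
        add_right_comm u De xe]
      abel
    rw [hu, hsplit, add_right_comm u De xe]
    refine add_mem ((isLeadingRightMul_D i).mul_mem_lowerSpan ih) ?_
    split_ifs with hij
    · subst hij
      rw [V.basis_mul_t_pow]
      refine Module.Basis.basis_mem_lowerSpan ?_
      have : u + xe + De = u + (0, (Pi.single i 1, Pi.single i 1)) := by simp [add_assoc, xe, De]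
      rw [this]
      exact CovariantClass.elim u (rT_t_sq_lt_x_mul_D hδ hr i)
    · simp

theorem isLeadingRightMul_basis (hδ : IsOrderFunction K δ) (hr : WellMonomialOrdering r)
    (w : HMon n) : V.basis.IsLeadingRightMul (rT W δ r) (V.basis w) w := by
  have := rT_isWellOrder (W := W) (δ := δ) hr
  have := rT_covariant (W := W) hδ hr
  have h := (isLeadingRightMul_t_pow (V := V) (W := W) (δ := δ) (r := r) w.1).mul
    ((Module.Basis.isLeadingRightMul_prod_ofFn fun i =>
      (isLeadingRightMul_x hδ hr i).pow (w.2.1 i)).mul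
      (Module.Basis.isLeadingRightMul_prod_ofFn fun i => (isLeadingRightMul_D i).pow (w.2.2 i)))
  rw [V.basis_eq, wmono]
  convert h using 1
  ext <;> simp [Prod.fst_sum, Prod.snd_sum, Finset.sum_apply, Pi.single_apply]

end LeadingMonomials

theorem division_theorem_general (K : Type*) [Field K] (n : ℕ) (A B : Type*) [Ring A]
    [Algebra K A] [Ring B] [Algebra K B] (W : WeylData K n A) (V : HWeylData K n B)
    (δ : A → WithBot ℤ) (hδ : IsAdmissible W δ)
    (r : WMon n → WMon n → Prop) (hr : WellMonomialOrdering r)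
    (m : ℕ) (P : Fin m → B) (e : Fin m → HMon n)
    (hexp : ∀ i, IsExpH V (rT W δ r) (P i) (e i)) (H : B) :
    ∃! QR : (Fin m → B) × B,
      H = (∑ i, QR.1 i * P i) + QR.2 ∧
      (∀ i, ∀ v ∈ NDH V (QR.1 i),
        e i + v ∈ expCone (e i) \ ⋃ j ∈ Set.Iio i, expCone (e j)) ∧
      (∀ v ∈ NDH V QR.2, v ∈ (⋃ i, expCone (e i))ᶜ) := by
  have := rT_isWellOrder (W := W) (δ := δ) hr
  have := rT_covariant (W := W) hδ.1 hr
  exact V.basis.existsUnique_division (isLeadingRightMul_basis hδ.1 hr) hexp H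

/-- division theorem in `A_n[t]`: given nonzero `P₁,…,P_r ∈ A_n[t]` with
`⊲`-exponents `e₁,…,e_r`, and the partition `Δᵢ = (eᵢ + ℕ^{2n+1}) \ ∪_{j<i} Δⱼ`,
`Δ̄ = ℕ^{2n+1} \ ∪ᵢ Δᵢ`, every `H ∈ A_n[t]` has a unique expression
`H = Σ Qᵢ Pᵢ + R` with `eᵢ + N(Qᵢ) ⊆ Δᵢ` and `N(R) ⊆ Δ̄`. -/
theorem division_theorem (K : Type*) [Field K] (n : ℕ) (A B : Type*) [Ring A]
    [Algebra K A] [Ring B] [Algebra K B] (W : WeylData K n A) (V : HWeylData K n B)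
    (δ : A → WithBot ℤ) (hδ : IsAdmissible W δ)
    (r : WMon n → WMon n → Prop) (hr : WellMonomialOrdering r)
    (m : ℕ) (P : Fin m → B) (hP : ∀ i, P i ≠ 0) (e : Fin m → HMon n)
    (hexp : ∀ i, IsExpH V (rT W δ r) (P i) (e i)) (H : B) :
    ∃! QR : (Fin m → B) × B,
      H = (∑ i, QR.1 i * P i) + QR.2 ∧
      (∀ i, ∀ v ∈ NDH V (QR.1 i),
        e i + v ∈ expCone (e i) \ ⋃ j ∈ Set.Iio i, expCone (e j)) ∧
      (∀ v ∈ NDH V QR.2, v ∈ (⋃ i, expCone (e i))ᶜ) :=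
  division_theorem_general K n A B W V δ hδ r hr m P e hexp H
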